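/- Fix an integer k \ge 2 and let F_k(y) = (2y^2 - 4y + 3)/\sqrt{y(4y^4 - 12y^3 + 9y^2 + 10k y - 12k)} and G_k(y) = \exp(15(2k - y)/(2y(2y-3)^2)). Then the function v_2(y) = F_k(y)/G_k(y) is strictly decreasing on [3(2k)^{1/3}, \infty). -/

import Mathlib

set_option maxHeartbeats 1000000

noncomputable def Fk (k : ℕ) (y : ℝ) : ℝ :=
  (2 * y ^ 2 - 4 * y + 3) /
    Real.sqrt (y * (4 * y ^ 4 - 12 * y ^ 3 + 9 * y ^ 2 + 10 * k * y - 12 * k))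

noncomputable def Gk (k : ℕ) (y : ℝ) : ℝ :=
  Real.exp (15 * (2 * k - y) / (2 * y * (2 * y - 3) ^ 2))

lemma keyS (y : ℝ) (hy : 19/4 ≤ y) :
    -19552*y^8 + 342592*y^7 - 2638456*y^6 + 10532352*y^5 - 24158916*y^4
      + 33285384*y^3 - 27183924*y^2 + 11984760*y - 2125764 < 0 := by
  have ht : (0:ℝ) ≤ y - 19/4 := by linarith
  nlinarith [pow_nonneg ht 2, pow_nonneg ht 3, pow_nonneg ht 4, pow_nonneg ht 5,
    pow_nonneg ht 6, pow_nonneg ht 7, pow_nonneg ht 8, ht]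

lemma keyA (y : ℝ) (hy : 19/4 ≤ y) :
    0 ≤ 28800*y^6 - 149760*y^5 + 318240*y^4 - 345600*y^3 + 187920*y^2 - 38880*y := by
  have ht : (0:ℝ) ≤ y - 19/4 := by linarith
  nlinarith [pow_nonneg ht 2, pow_nonneg ht 3, pow_nonneg ht 4, pow_nonneg ht 5,
    pow_nonneg ht 6, ht]

lemma keyB (y : ℝ) (hy : 19/4 ≤ y) :
    0 ≤ 14080*y^9 - 100608*y^8 + 288000*y^7 - 416256*y^6 + 297936*y^5 - 63936*y^4
      - 31752*y^3 + 11664*y^2 := by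
  have ht : (0:ℝ) ≤ y - 19/4 := by linarith
  nlinarith [pow_nonneg ht 2, pow_nonneg ht 3, pow_nonneg ht 4, pow_nonneg ht 5,
    pow_nonneg ht 6, pow_nonneg ht 7, pow_nonneg ht 8, pow_nonneg ht 9, ht]

lemma keyE (K y : ℝ) (hK : 2 ≤ K) (hy : 19/4 ≤ y) (hky : 54*K ≤ y^3) :
    2*(4*y-4)*(y*(4*y^4-12*y^3+9*y^2+10*K*y-12*K))*(2*y*(2*y-3)^2)^2
      - (2*y^2-4*y+3)*(20*y^4-48*y^3+27*y^2+20*K*y-12*K)*(2*y*(2*y-3)^2)^2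
      - 2*(2*y^2-4*y+3)*(y*(4*y^4-12*y^3+9*y^2+10*K*y-12*K))
          *((-15)*(2*y*(2*y-3)^2) - 15*(2*K-y)*((2*y-3)*(12*y-6))) < 0 := by
  have hS := keyS y hy
  have hA := keyA y hy
  have hB := keyB y hy
  have hy0 : (0:ℝ) < y := by linarith
  have hKt : K ≤ y^3/54 := by linarith
  have h1 : 0 ≤ (28800*y^6 - 149760*y^5 + 318240*y^4 - 345600*y^3 + 187920*y^2 - 38880*y)
      * ((y^3/54 - K) * (y^3/54 + K)) :=
    mul_nonneg hA (mul_nonneg (by linarith) (by linarith))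
  have h2 : 0 ≤ (14080*y^9 - 100608*y^8 + 288000*y^7 - 416256*y^6 + 297936*y^5 - 63936*y^4
      - 31752*y^3 + 11664*y^2) * (y^3/54 - K) :=
    mul_nonneg hB (by linarith)
  have h3 : y^4 * (-19552*y^8 + 342592*y^7 - 2638456*y^6 + 10532352*y^5 - 24158916*y^4
      + 33285384*y^3 - 27183924*y^2 + 11984760*y - 2125764) < 0 :=
    mul_neg_of_pos_of_neg (pow_pos hy0 4) hS
  nlinarith [h1, h2, h3]

lemma Qpos (K y : ℝ) (hK : 2 ≤ K) (hy : 19/4 ≤ y) :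
    0 < y * (4 * y ^ 4 - 12 * y ^ 3 + 9 * y ^ 2 + 10 * K * y - 12 * K) := by
  have h1 : 0 < 10 * K * y - 12 * K := by nlinarith
  have h2 : (0:ℝ) < y := by linarith
  have h3 : (0:ℝ) < (2 * y - 3) ^ 2 := by nlinarith
  nlinarith [mul_pos h2 h1, mul_pos (mul_pos h2 (pow_pos h2 2)) h3]

lemma lem_deriv (k : ℕ) (y : ℝ) (hk : 2 ≤ k) (hy : 19/4 ≤ y) :
    HasDerivAt (fun z => Fk k z / Gk k z)
      ((((4*y-4) * Real.sqrt (y * (4 * y ^ 4 - 12 * y ^ 3 + 9 * y ^ 2 + 10 * k * y - 12 * k))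
          - (2 * y ^ 2 - 4 * y + 3) *
            ((20*y^4 - 48*y^3 + 27*y^2 + 20*k*y - 12*k) /
              (2 * Real.sqrt (y * (4 * y ^ 4 - 12 * y ^ 3 + 9 * y ^ 2 + 10 * k * y - 12 * k))))) /
          Real.sqrt (y * (4 * y ^ 4 - 12 * y ^ 3 + 9 * y ^ 2 + 10 * k * y - 12 * k)) ^ 2
          * Real.exp (15 * (2 * k - y) / (2 * y * (2 * y - 3) ^ 2))
        - (2 * y ^ 2 - 4 * y + 3) /
            Real.sqrt (y * (4 * y ^ 4 - 12 * y ^ 3 + 9 * y ^ 2 + 10 * k * y - 12 * k)) *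
            (Real.exp (15 * (2 * k - y) / (2 * y * (2 * y - 3) ^ 2)) *
              (((-15) * (2 * y * (2 * y - 3) ^ 2) - 15 * (2 * k - y) * ((2*y-3)*(12*y-6))) /
                (2 * y * (2 * y - 3) ^ 2) ^ 2)))
        / Real.exp (15 * (2 * k - y) / (2 * y * (2 * y - 3) ^ 2)) ^ 2) y := by
  have hK : (2:ℝ) ≤ (k:ℝ) := by exact_mod_cast hk
  have hQ0 : y * (4 * y ^ 4 - 12 * y ^ 3 + 9 * y ^ 2 + 10 * k * y - 12 * k) ≠ 0 :=
    ne_of_gt (Qpos k y hK hy)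
  have hsqpos : 0 < Real.sqrt (y * (4 * y ^ 4 - 12 * y ^ 3 + 9 * y ^ 2 + 10 * k * y - 12 * k)) :=
    Real.sqrt_pos.2 (Qpos k y hK hy)
  have hP : HasDerivAt (fun z : ℝ => 2 * z ^ 2 - 4 * z + 3) (4*y-4) y := by
    have h := (((hasDerivAt_pow 2 y).const_mul (2:ℝ)).sub
      ((hasDerivAt_id' y).const_mul (4:ℝ))).add_const (3:ℝ)
    exact h.congr_deriv (by push_cast; ring)
  have hQ : HasDerivAt (fun z : ℝ => z * (4 * z ^ 4 - 12 * z ^ 3 + 9 * z ^ 2 + 10 * k * z - 12 * k))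
      (20*y^4 - 48*y^3 + 27*y^2 + 20*k*y - 12*k) y := by
    have hin : HasDerivAt (fun z : ℝ => 4 * z ^ 4 - 12 * z ^ 3 + 9 * z ^ 2 + 10 * (k:ℝ) * z - 12 * (k:ℝ))
        (16*y^3 - 36*y^2 + 18*y + 10*k) y := by
      have h := (((((hasDerivAt_pow 4 y).const_mul (4:ℝ)).sub
        ((hasDerivAt_pow 3 y).const_mul (12:ℝ))).add
        ((hasDerivAt_pow 2 y).const_mul (9:ℝ))).add
        ((hasDerivAt_id' y).const_mul (10*(k:ℝ)))).sub_const (12*(k:ℝ))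
      exact h.congr_deriv (by push_cast; ring)
    have h := (hasDerivAt_id' y).mul hin
    exact h.congr_deriv (by ring)
  have hsq := hQ.sqrt hQ0
  have hF := hP.div hsq (ne_of_gt hsqpos)
  have hD : HasDerivAt (fun z : ℝ => 2 * z * (2 * z - 3) ^ 2) ((2*y-3)*(12*y-6)) y := by
    have hin : HasDerivAt (fun z : ℝ => (2 * z - 3) ^ 2) (2 * (2*y-3) ^ 1 * 2) y := by
      have h := (((hasDerivAt_id' y).const_mul (2:ℝ)).sub_const (3:ℝ)).pow 2
      exact h.congr_deriv (by push_cast; ring)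
    have h := ((hasDerivAt_id' y).const_mul (2:ℝ)).mul hin
    exact h.congr_deriv (by ring)
  have hN : HasDerivAt (fun z : ℝ => 15 * (2 * (k:ℝ) - z)) (-15) y := by
    have h := ((hasDerivAt_id' y).const_sub (2*(k:ℝ))).const_mul (15:ℝ)
    exact h.congr_deriv (by ring)
  have hD0 : 2 * y * (2 * y - 3) ^ 2 ≠ 0 := by
    have h1 : (0:ℝ) < 2 * y := by linarith
    have h2 : (0:ℝ) < (2 * y - 3) ^ 2 := by nlinarith
    positivity
  have hg := hN.div hD hD0
  have hG := hg.exp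
  have hv := hF.div hG (Real.exp_ne_zero _)
  simp only [Fk, Gk]
  exact hv

lemma lem_neg (k : ℕ) (y : ℝ) (hk : 2 ≤ k) (hy : 19/4 ≤ y) (hky : 54*(k:ℝ) ≤ y^3) :
      ((((4*y-4) * Real.sqrt (y * (4 * y ^ 4 - 12 * y ^ 3 + 9 * y ^ 2 + 10 * k * y - 12 * k))
          - (2 * y ^ 2 - 4 * y + 3) *
            ((20*y^4 - 48*y^3 + 27*y^2 + 20*k*y - 12*k) /
              (2 * Real.sqrt (y * (4 * y ^ 4 - 12 * y ^ 3 + 9 * y ^ 2 + 10 * k * y - 12 * k))))) /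
          Real.sqrt (y * (4 * y ^ 4 - 12 * y ^ 3 + 9 * y ^ 2 + 10 * k * y - 12 * k)) ^ 2
          * Real.exp (15 * (2 * k - y) / (2 * y * (2 * y - 3) ^ 2))
        - (2 * y ^ 2 - 4 * y + 3) /
            Real.sqrt (y * (4 * y ^ 4 - 12 * y ^ 3 + 9 * y ^ 2 + 10 * k * y - 12 * k)) *
            (Real.exp (15 * (2 * k - y) / (2 * y * (2 * y - 3) ^ 2)) *
              (((-15) * (2 * y * (2 * y - 3) ^ 2) - 15 * (2 * k - y) * ((2*y-3)*(12*y-6))) /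
                (2 * y * (2 * y - 3) ^ 2) ^ 2)))
        / Real.exp (15 * (2 * k - y) / (2 * y * (2 * y - 3) ^ 2)) ^ 2) < 0 := by
  have hK : (2:ℝ) ≤ (k:ℝ) := by exact_mod_cast hk
  have hQpos := Qpos (k:ℝ) y hK hy
  set Q := y * (4 * y ^ 4 - 12 * y ^ 3 + 9 * y ^ 2 + 10 * (k:ℝ) * y - 12 * (k:ℝ)) with hQdef
  set s := Real.sqrt Q with hsdef
  have hs : 0 < s := Real.sqrt_pos.2 hQpos
  have hs2 : s ^ 2 = Q := Real.sq_sqrt hQpos.le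
  have hy0 : (0:ℝ) < y := by linarith
  have hDpos : 0 < 2 * y * (2 * y - 3) ^ 2 := by nlinarith
  have hGpos : 0 < Real.exp (15 * (2 * (k:ℝ) - y) / (2 * y * (2 * y - 3) ^ 2)) := Real.exp_pos _
  apply div_neg_of_neg_of_pos _ (pow_pos hGpos 2)
  have hfac : ∀ Fd F gd G : ℝ, Fd * G - F * (G * gd) = G * (Fd - F * gd) := by intros; ring
  rw [hfac]
  apply mul_neg_of_pos_of_neg hGpos
  have heq : ((4*y-4) * s - (2 * y ^ 2 - 4 * y + 3) *
        ((20*y^4 - 48*y^3 + 27*y^2 + 20*(k:ℝ)*y - 12*(k:ℝ)) / (2 * s))) / s ^ 2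
      - (2 * y ^ 2 - 4 * y + 3) / s *
        (((-15) * (2 * y * (2 * y - 3) ^ 2) - 15 * (2 * (k:ℝ) - y) * ((2*y-3)*(12*y-6))) /
          (2 * y * (2 * y - 3) ^ 2) ^ 2)
      = (2*(4*y-4)*(s^2)*(2*y*(2*y-3)^2)^2
          - (2*y^2-4*y+3)*(20*y^4-48*y^3+27*y^2+20*(k:ℝ)*y-12*(k:ℝ))*(2*y*(2*y-3)^2)^2
          - 2*(2*y^2-4*y+3)*(s^2)
              *((-15)*(2*y*(2*y-3)^2) - 15*(2*(k:ℝ)-y)*((2*y-3)*(12*y-6))))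
        / (2 * s^3 * (2*y*(2*y-3)^2)^2) := by
    have hD := hDpos.ne'
    have hs' := hs.ne'
    generalize 2 * y * (2 * y - 3) ^ 2 = D at hD ⊢
    field_simp
  rw [heq]
  apply div_neg_of_neg_of_pos
  · rw [hs2, hQdef]
    nlinarith [keyE (k:ℝ) y hK hy hky]
  · exact mul_pos (mul_pos two_pos (pow_pos hs 3)) (pow_pos hDpos 2)

theorem v2_strictAnti (k : ℕ) (hk : 2 ≤ k) :
    StrictAntiOn (fun y => Fk k y / Gk k y)
      (Set.Ici (3 * (2 * (k : ℝ)) ^ ((1 : ℝ) / 3))) := by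
  have hK : (2:ℝ) ≤ (k:ℝ) := by exact_mod_cast hk
  set a := (2*(k:ℝ))^((1:ℝ)/3) with hadef
  have ha3 : a^(3:ℕ) = 2*(k:ℝ) := by
    rw [hadef, ← Real.rpow_natCast ((2*(k:ℝ))^((1:ℝ)/3)) 3, ← Real.rpow_mul (by linarith)]
    norm_num
  have ha0 : 0 ≤ a := Real.rpow_nonneg (by linarith) _
  have ha : (19:ℝ)/12 ≤ a := by nlinarith [ha3, ha0, hK, sq_nonneg a, sq_nonneg (a - 19/12)]
  apply strictAntiOn_of_deriv_neg (convex_Ici _)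
  · intro x hx
    have hx' : (19:ℝ)/4 ≤ x := by
      have h := Set.mem_Ici.1 hx; linarith
    exact (lem_deriv k x hk hx').continuousAt.continuousWithinAt
  · intro x hx
    rw [interior_Ici] at hx
    have hx0 : 3*a ≤ x := le_of_lt hx
    have hx' : (19:ℝ)/4 ≤ x := by linarith
    have hky : 54*(k:ℝ) ≤ x^3 := by
      have h1 : (3*a)^3 ≤ x^3 := pow_le_pow_left₀ (by linarith) hx0 3
      nlinarith [ha3]
    rw [(lem_deriv k x hk hx').deriv]
    exact lem_neg k x hk hx' hky
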